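/- Let H be a Hopf *-algebra with invertible antipode and B a braided-commutative *-algebra in right H-crossed modules with unitary action and coaction. Then the antilinear map ⋆ on B ⊗ H defined by (b ⊗ h)^⋆ = b*₍₀₎ ◁ S(b*₍₁₎) h*₁ ⊗ h*₂ is involutive: ((b ⊗ h)^⋆)^⋆ = b ⊗ h. -/

import Mathlib

/-!
Put `θ(c) = c₍₀₎ ◁ S(c₍₁₎)` (`twist`). Since the action is a right action, the linear part of
`⋆` is `c ⊗ k ↦ θ(c) ◁ k₁ ⊗ k₂`. Applying `x ↦ x ◁ S(y)` to the Yetter–Drinfeld condition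
gives `θ(a ◁ w₂) ◁ S(w₁) = ε(w) θ(a)`, hence `θ(a ◁ w) = θ(a) ◁ S²(w)`. Unitarity gives
`θ(b*)* = b₍₀₎ ◁ S⁻¹((S(b₍₁₎*))*)`, so `θ(θ(b*)*) = θ(b₍₀₎) ◁ b₍₁₎ = b₍₀₎ ◁ S(b₍₁₎₁) b₍₁₎₂ = b`.
Applying `⋆` twice to `b ⊗ h` therefore yields `θ(θ(b*)*) ◁ S(h₁) h₂ ⊗ h₃ = b ⊗ h`.
-/

open TensorProduct

noncomputable section

variable (H : Type) [Ring H] [HopfAlgebra ℂ H] [StarRing H] [StarModule ℂ H]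
variable (B : Type) [Ring B] [Algebra ℂ B] [StarRing B] [StarModule ℂ B]
variable (act : B ⊗[ℂ] H →ₗ[ℂ] B) (coact : B →ₗ[ℂ] B ⊗[ℂ] H)

/-- `(a ◁ h₂)₍₀₎ ⊗ h₁ · (a ◁ h₂)₍₁₎` for a right action `act` and right coaction `coact`. -/
def ydLHS (a : B) (h : H) : B ⊗[ℂ] H :=
  (TensorProduct.map (LinearMap.id : B →ₗ[ℂ] B) (LinearMap.mul' ℂ H))
    ((TensorProduct.assoc ℂ B H H)
      ((TensorProduct.map (TensorProduct.comm ℂ H B).toLinearMap (LinearMap.id : H →ₗ[ℂ] H))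
        ((TensorProduct.assoc ℂ H B H).symm
          ((TensorProduct.map (LinearMap.id : H →ₗ[ℂ] H)
              (coact ∘ₗ act ∘ₗ TensorProduct.mk ℂ B H a))
            (Coalgebra.comul (R := ℂ) h)))))

/-- `a₍₀₎ ◁ h₁ ⊗ a₍₁₎ · h₂`. -/
def ydRHS (a : B) (h : H) : B ⊗[ℂ] H :=
  (TensorProduct.map act (LinearMap.mul' ℂ H))
    ((TensorProduct.tensorTensorTensorComm ℂ B H H H)
      (coact a ⊗ₜ[ℂ] Coalgebra.comul (R := ℂ) h))

/-- `b' ⊗ h' ↦ b'₍₀₎ ◁ (S(b'₍₁₎) h'₁) ⊗ h'₂`, the linear part of the `⋆`-structure. -/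
def lStar : B ⊗[ℂ] H →ₗ[ℂ] B ⊗[ℂ] H :=
  (TensorProduct.map
      (act ∘ₗ TensorProduct.map (LinearMap.id : B →ₗ[ℂ] B) (LinearMap.mul' ℂ H))
      (LinearMap.id : H →ₗ[ℂ] H)) ∘ₗ
  (TensorProduct.map (TensorProduct.assoc ℂ B H H).toLinearMap (LinearMap.id : H →ₗ[ℂ] H)) ∘ₗ
  (TensorProduct.assoc ℂ (B ⊗[ℂ] H) H H).symm.toLinearMap ∘ₗ
  (TensorProduct.map
      (TensorProduct.map (LinearMap.id : B →ₗ[ℂ] B) (HopfAlgebra.antipode (R := ℂ)))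
      (LinearMap.id : H ⊗[ℂ] H →ₗ[ℂ] H ⊗[ℂ] H)) ∘ₗ
  (TensorProduct.map coact (Coalgebra.comul (R := ℂ)))

open HopfAlgebra

lemma map_sum_of_map_add {M N : Type*} [AddCommMonoid M] [AddCommGroup N] (f : M → N)
    (hf : ∀ x y, f (x + y) = f x + f y) {ι : Type*} (s : Finset ι) (g : ι → M) :
    f (∑ i ∈ s, g i) = ∑ i ∈ s, f (g i) :=
  map_sum (AddMonoidHom.mk' f hf) g s

section Hopf

variable {R A : Type*} [CommSemiring R] [Semiring A] [HopfAlgebra R A]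

lemma sum_counit_right_smul {a : A} {ι : Type*} (r : Coalgebra.Repr R a ι) :
    ∑ i ∈ r.index, Coalgebra.counit (R := R) (r.right i) • r.left i = a := by
  have := congrArg (TensorProduct.rid R A) (Coalgebra.sum_tmul_counit_eq r)
  simpa only [map_sum, TensorProduct.rid_tmul, one_smul] using this

lemma sum_antipode_mul_tmul_eq {a : A} {ι : Type*} {κ : ι → Type*} (r : Coalgebra.Repr R a ι)
    (r₂ : ∀ i, Coalgebra.Repr R (r.right i) (κ i)) :
    ∑ i ∈ r.index, ∑ j ∈ (r₂ i).index,
      (antipode R (r.left i) * (r₂ i).left j) ⊗ₜ[R] (r₂ i).right j = 1 ⊗ₜ a := by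
  have := congr((LinearMap.mul' R A ∘ₗ (antipode R).rTensor A).rTensor A
    ((TensorProduct.assoc R A A A).symm
      $(Coalgebra.sum_tmul_tmul_eq r (fun i ↦ Coalgebra.Repr.arbitrary R (r.left i)) r₂)))
  simp only [map_sum, TensorProduct.assoc_symm_tmul, LinearMap.rTensor_tmul, LinearMap.coe_comp,
    Function.comp_apply, LinearMap.mul'_apply, ← sum_tmul, sum_antipode_mul_eq_smul] at this
  rw [← this]
  conv_rhs => rw [← Coalgebra.sum_counit_smul r]
  simp only [tmul_sum, smul_tmul]

end Hopf

section Twist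

variable {R H B : Type*} [CommSemiring R] [Semiring H] [HopfAlgebra R H]
  [AddCommMonoid B] [Module R B] (act : B ⊗[R] H →ₗ[R] B) (coact : B →ₗ[R] B ⊗[R] H)

def twist : B →ₗ[R] B := act ∘ₗ (antipode R).lTensor B ∘ₗ coact

lemma act_rTensor_twist_coact
    (hact_one : ∀ b : B, act (b ⊗ₜ 1) = b)
    (hact_mul : ∀ (b : B) (g h : H), act (act (b ⊗ₜ g) ⊗ₜ h) = act (b ⊗ₜ (g * h)))
    (hcoassoc : ∀ b : B,
      TensorProduct.assoc R B H H (TensorProduct.map coact LinearMap.id (coact b)) =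
        TensorProduct.map LinearMap.id (Coalgebra.comul (R := R)) (coact b))
    (hcounit : ∀ b : B,
      TensorProduct.rid R B (TensorProduct.map LinearMap.id (Coalgebra.counit (R := R)) (coact b)) =
        b)
    (b : B) :
    act ((twist act coact).rTensor H (coact b)) = b := by
  let g := act ∘ₗ (LinearMap.mul' R H ∘ₗ (antipode R).rTensor H).lTensor B
  have hact_twist : act ∘ₗ (twist act coact).rTensor H =
      g ∘ₗ (TensorProduct.assoc R B H H).toLinearMap ∘ₗ TensorProduct.map coact LinearMap.id := by
    ext c h
    show act (act ((antipode R).lTensor B (coact c)) ⊗ₜ h) =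
      g (TensorProduct.assoc R B H H (coact c ⊗ₜ h))
    generalize coact c = t
    induction t using TensorProduct.induction_on with
    | zero => simp
    | tmul d y => simp [g, hact_mul]
    | add t u ht hu => simp only [map_add, add_tmul, ht, hu]
  have hg_comul : g ∘ₗ TensorProduct.map LinearMap.id (Coalgebra.comul (R := R)) =
      (TensorProduct.rid R B).toLinearMap ∘ₗ
        TensorProduct.map LinearMap.id (Coalgebra.counit (R := R)) := by
    ext c h
    simp [g, mul_antipode_rTensor_comul_apply, Algebra.algebraMap_eq_smul_one, hact_one]
  calc act ((twist act coact).rTensor H (coact b))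
      = g (TensorProduct.assoc R B H H (TensorProduct.map coact LinearMap.id (coact b))) :=
        congr($hact_twist (coact b))
    _ = b := by rw [hcoassoc, ← LinearMap.comp_apply, hg_comul]; exact hcounit b

end Twist

section YetterDrinfeld

variable {H B : Type} [Ring H] [HopfAlgebra ℂ H] [Ring B] [Algebra ℂ B]
  {act : B ⊗[ℂ] H →ₗ[ℂ] B} {coact : B →ₗ[ℂ] B ⊗[ℂ] H}

lemma act_lTensor_antipode_ydLHS
    (hact_mul : ∀ (b : B) (g h : H), act (act (b ⊗ₜ g) ⊗ₜ h) = act (b ⊗ₜ (g * h)))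
    (a : B) {w : H} {ι : Type*} (r : Coalgebra.Repr ℂ w ι) :
    act ((antipode ℂ).lTensor B (ydLHS H B act coact a w)) =
      ∑ i ∈ r.index, act (twist act coact (act (a ⊗ₜ r.right i)) ⊗ₜ antipode ℂ (r.left i)) := by
  unfold ydLHS twist
  rw [← r.eq]
  simp only [map_sum]
  refine Finset.sum_congr rfl fun i _ ↦ ?_
  simp only [map_tmul, LinearMap.coe_comp, Function.comp_apply, TensorProduct.mk_apply]
  generalize coact (act (a ⊗ₜ r.right i)) = t
  induction t using TensorProduct.induction_on with
  | zero => simp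
  | tmul d y => simp [hact_mul, antipode_mul_antidistrib]
  | add t u ht hu => simp only [tmul_add, map_add, add_tmul, ht, hu]

lemma act_lTensor_antipode_ydRHS
    (hact_mul : ∀ (b : B) (g h : H), act (act (b ⊗ₜ g) ⊗ₜ h) = act (b ⊗ₜ (g * h)))
    (a : B) (w : H) :
    act ((antipode ℂ).lTensor B (ydRHS H B act coact a w)) =
      Coalgebra.counit (R := ℂ) w • twist act coact a := by
  obtain ⟨s, hs⟩ := TensorProduct.exists_finset (coact a)
  unfold ydRHS twist
  rw [← (Coalgebra.Repr.arbitrary ℂ w).eq]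
  simp only [LinearMap.coe_comp, Function.comp_apply, hs, map_sum, sum_tmul, tmul_sum,
    Finset.smul_sum]
  rw [Finset.sum_comm]
  refine Finset.sum_congr rfl fun p _ ↦ ?_
  simp only [tensorTensorTensorComm_tmul, map_tmul, LinearMap.mul'_apply, LinearMap.lTensor_tmul,
    antipode_mul_antidistrib, hact_mul]
  simp only [← mul_assoc]
  rw [← map_sum, ← tmul_sum, ← Finset.sum_mul, sum_mul_antipode_eq_smul, smul_mul_assoc, one_mul,
    tmul_smul, map_smul]

lemma sum_act_twist_act_antipode
    (hact_mul : ∀ (b : B) (g h : H), act (act (b ⊗ₜ g) ⊗ₜ h) = act (b ⊗ₜ (g * h)))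
    (hYD : ∀ (a : B) (h : H), ydLHS H B act coact a h = ydRHS H B act coact a h)
    (a : B) {w : H} {ι : Type*} (r : Coalgebra.Repr ℂ w ι) :
    ∑ i ∈ r.index, act (twist act coact (act (a ⊗ₜ r.right i)) ⊗ₜ antipode ℂ (r.left i)) =
      Coalgebra.counit (R := ℂ) w • twist act coact a := by
  rw [← act_lTensor_antipode_ydLHS hact_mul a r, hYD, act_lTensor_antipode_ydRHS hact_mul]

lemma twist_act
    (hact_one : ∀ b : B, act (b ⊗ₜ 1) = b)
    (hact_mul : ∀ (b : B) (g h : H), act (act (b ⊗ₜ g) ⊗ₜ h) = act (b ⊗ₜ (g * h)))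
    (hYD : ∀ (a : B) (h : H), ydLHS H B act coact a h = ydRHS H B act coact a h)
    (a : B) (w : H) :
    twist act coact (act (a ⊗ₜ w)) = act (twist act coact a ⊗ₜ antipode ℂ (antipode ℂ w)) := by
  set r := Coalgebra.Repr.arbitrary ℂ w
  set r₂ := fun i ↦ Coalgebra.Repr.arbitrary ℂ (r.right i)
  have hcollapse := congrArg
    (act ∘ₗ TensorProduct.map (twist act coact ∘ₗ act ∘ₗ TensorProduct.mk ℂ B H a) (antipode ℂ) ∘ₗ
      (TensorProduct.comm ℂ H H).toLinearMap) (sum_antipode_mul_tmul_eq r r₂)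
  simp only [map_sum, LinearMap.coe_comp, Function.comp_apply, LinearEquiv.coe_coe, comm_tmul,
    map_tmul, TensorProduct.mk_apply, antipode_mul_antidistrib, antipode_one, hact_one,
    ← hact_mul] at hcollapse
  calc twist act coact (act (a ⊗ₜ w))
      = ∑ i ∈ r.index, act ((∑ j ∈ (r₂ i).index, act (twist act coact (act (a ⊗ₜ (r₂ i).right j))
          ⊗ₜ antipode ℂ ((r₂ i).left j))) ⊗ₜ antipode ℂ (antipode ℂ (r.left i))) := by
        rw [← hcollapse]
        simp only [sum_tmul, map_sum]
    _ = ∑ i ∈ r.index, Coalgebra.counit (R := ℂ) (r.right i) •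
          act (twist act coact a ⊗ₜ antipode ℂ (antipode ℂ (r.left i))) := by
        simp only [sum_act_twist_act_antipode hact_mul hYD, ← smul_tmul', map_smul]
    _ = act (twist act coact a ⊗ₜ antipode ℂ (antipode ℂ w)) := by
        conv_rhs => rw [← sum_counit_right_smul r]
        simp only [map_sum, map_smul, tmul_sum, tmul_smul]

lemma lStar_tmul
    (hact_mul : ∀ (b : B) (g h : H), act (act (b ⊗ₜ g) ⊗ₜ h) = act (b ⊗ₜ (g * h)))
    (c : B) {k : H} {ι : Type*} (r : Coalgebra.Repr ℂ k ι) :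
    lStar H B act coact (c ⊗ₜ k) =
      ∑ i ∈ r.index, act (twist act coact c ⊗ₜ r.left i) ⊗ₜ r.right i := by
  obtain ⟨s, hs⟩ := TensorProduct.exists_finset (coact c)
  simp only [lStar, twist, LinearMap.coe_comp, Function.comp_apply, map_tmul, ← r.eq, hs]
  simp only [map_sum, map_tmul, LinearMap.id_coe, id_eq, tmul_sum, sum_tmul, LinearEquiv.coe_coe,
    assoc_symm_tmul, assoc_tmul, LinearMap.coe_comp, Function.comp_apply, LinearMap.mul'_apply,
    LinearMap.lTensor_tmul, hact_mul]

end YetterDrinfeld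

lemma star_twist_star {H B : Type*} [Semiring H] [HopfAlgebra ℂ H] [Star H] [AddCommGroup B]
    [Module ℂ B] [StarAddMonoid B] {act : B ⊗[ℂ] H →ₗ[ℂ] B} {coact : B →ₗ[ℂ] B ⊗[ℂ] H} (Sinv : H →ₗ[ℂ] H)
    (sBH : B ⊗[ℂ] H → B ⊗[ℂ] H)
    (hsBH_add : ∀ u v : B ⊗[ℂ] H, sBH (u + v) = sBH u + sBH v)
    (hsBH_tmul : ∀ (b : B) (h : H), sBH (b ⊗ₜ[ℂ] h) = star b ⊗ₜ[ℂ] star h)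
    (hact_star : ∀ (b : B) (h : H),
      star (act (b ⊗ₜ[ℂ] h)) = act (star b ⊗ₜ[ℂ] Sinv (star h)))
    (hcoact_star : ∀ b : B, coact (star b) = sBH (coact b))
    {b : B} {s : Finset (B × H)} (hs : coact b = ∑ p ∈ s, p.1 ⊗ₜ p.2) :
    star (twist act coact (star b)) =
      ∑ p ∈ s, act (p.1 ⊗ₜ Sinv (star (antipode ℂ (star p.2)))) := by
  rw [twist, LinearMap.comp_apply, LinearMap.comp_apply, hcoact_star, hs,
    map_sum_of_map_add sBH hsBH_add]
  simp [hsBH_tmul, star_sum, hact_star]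

theorem smash_star_involutive (Sinv : H →ₗ[ℂ] H)
    (hSinv₂ : ∀ h : H, HopfAlgebra.antipode (R := ℂ) (Sinv h) = h)
    (sHH : H ⊗[ℂ] H → H ⊗[ℂ] H)
    (hsHH_add : ∀ u v : H ⊗[ℂ] H, sHH (u + v) = sHH u + sHH v)
    (hsHH_tmul : ∀ x y : H, sHH (x ⊗ₜ[ℂ] y) = star x ⊗ₜ[ℂ] star y)
    (hcomul_star : ∀ h : H, Coalgebra.comul (R := ℂ) (star h) = sHH (Coalgebra.comul (R := ℂ) h))
    (hSstar : ∀ h : H,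
      HopfAlgebra.antipode (R := ℂ) (star (HopfAlgebra.antipode (R := ℂ) (star h))) = h)
    (hact_one : ∀ b : B, act (b ⊗ₜ[ℂ] 1) = b)
    (hact_mul : ∀ (b : B) (g h : H), act (act (b ⊗ₜ[ℂ] g) ⊗ₜ[ℂ] h) = act (b ⊗ₜ[ℂ] (g * h)))
    (hcoassoc : ∀ b : B,
      (TensorProduct.assoc ℂ B H H)
          ((TensorProduct.map coact (LinearMap.id : H →ₗ[ℂ] H)) (coact b)) =
        (TensorProduct.map (LinearMap.id : B →ₗ[ℂ] B) (Coalgebra.comul (R := ℂ))) (coact b))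
    (hcounit : ∀ b : B,
      (TensorProduct.rid ℂ B)
        ((TensorProduct.map (LinearMap.id : B →ₗ[ℂ] B) (Coalgebra.counit (R := ℂ)))
          (coact b)) = b)
    (hYD : ∀ (a : B) (h : H), ydLHS H B act coact a h = ydRHS H B act coact a h)
    (sBH : B ⊗[ℂ] H → B ⊗[ℂ] H)
    (hsBH_add : ∀ u v : B ⊗[ℂ] H, sBH (u + v) = sBH u + sBH v)
    (hsBH_tmul : ∀ (b : B) (h : H), sBH (b ⊗ₜ[ℂ] h) = star b ⊗ₜ[ℂ] star h)
    (hact_star : ∀ (b : B) (h : H),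
      star (act (b ⊗ₜ[ℂ] h)) = act (star b ⊗ₜ[ℂ] Sinv (star h)))
    (hcoact_star : ∀ b : B, coact (star b) = sBH (coact b))
    :
    ∀ (b : B) (h : H),
      lStar H B act coact (sBH (lStar H B act coact (sBH (b ⊗ₜ[ℂ] h)))) = b ⊗ₜ[ℂ] h := by
  intro b h
  have twist_act_Sinv (a : B) (y : H) :
      twist act coact (act (a ⊗ₜ Sinv y)) = act (twist act coact a ⊗ₜ antipode ℂ y) := by
    rw [twist_act hact_one hact_mul hYD, hSinv₂]
  have twist_star_twist_star : twist act coact (star (twist act coact (star b))) = b := by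
    obtain ⟨s, hs⟩ := TensorProduct.exists_finset (coact b)
    rw [star_twist_star Sinv sBH hsBH_add hsBH_tmul hact_star hcoact_star hs, map_sum]
    conv_rhs => rw [← act_rTensor_twist_coact act coact hact_one hact_mul hcoassoc hcounit b, hs]
    simp [twist_act_Sinv, hSstar]
  set r := Coalgebra.Repr.arbitrary ℂ h
  set r₂ := fun i ↦ Coalgebra.Repr.arbitrary ℂ (r.right i)
  let r_star : Coalgebra.Repr ℂ (star h) (H × H) :=
    { index := r.index, left i := star (r.left i), right i := star (r.right i)
      eq := by rw [hcomul_star, ← r.eq, map_sum_of_map_add sHH hsHH_add]; simp only [hsHH_tmul] }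
  calc lStar H B act coact (sBH (lStar H B act coact (sBH (b ⊗ₜ[ℂ] h))))
      = lStar H B act coact (sBH (∑ i ∈ r.index,
          act (twist act coact (star b) ⊗ₜ star (r.left i)) ⊗ₜ star (r.right i))) := by
        rw [hsBH_tmul, lStar_tmul hact_mul _ r_star]
    _ = lStar H B act coact (∑ i ∈ r.index,
          act (star (twist act coact (star b)) ⊗ₜ Sinv (r.left i)) ⊗ₜ r.right i) := by
        simp [map_sum_of_map_add sBH hsBH_add, hsBH_tmul, hact_star]
    _ = ∑ i ∈ r.index, ∑ j ∈ (r₂ i).index,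
          act (b ⊗ₜ (antipode ℂ (r.left i) * (r₂ i).left j)) ⊗ₜ (r₂ i).right j := by
        simp [lStar_tmul hact_mul _ (r₂ _), twist_act_Sinv, twist_star_twist_star, hact_mul]
    _ = b ⊗ₜ h := by
        simpa [hact_one] using congrArg ((act ∘ₗ TensorProduct.mk ℂ B H b).rTensor H)
          (sum_antipode_mul_tmul_eq r r₂)
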